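/- For all real numbers a and b, letting x^- = max(-x, 0) denote the negative part, one has |a^- - b^-|^p ≤ |a-b|^{p-2}(a-b)(b^- - a^-) for every p > 1 (with the convention |a-b|^{p-2}(a-b) = 0 when a = b). -/
import Mathlib


theorem mul_nonneg_of_nonpos_nonpos_fix {x y : ℝ} (hx : x ≤ 0) (hy : y ≤ 0) : 0 ≤ x * y := by
  nlinarith

theorem stmt0 (p a b : ℝ) (hp : 1 < p) :
    |max (-a) 0 - max (-b) 0| ^ p ≤
      |a - b| ^ (p - 2) * (a - b) * (max (-b) 0 - max (-a) 0) := by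
  rcases eq_or_ne a b with rfl | hab
  · simp [Real.zero_rpow (by positivity : p ≠ 0)]
  have hd : 0 < |a - b| := abs_pos.2 (sub_ne_zero.2 hab)
  have hlip : |max (-a) 0 - max (-b) 0| ≤ |a - b| := by
    calc |max (-a) 0 - max (-b) 0| ≤ |(-a) - (-b)| := abs_max_sub_max_le_abs _ _ _
    _ = |a - b| := by rw [neg_sub_neg, abs_sub_comm]
  have hsign : 0 ≤ (a - b) * (max (-b) 0 - max (-a) 0) := by
    rcases le_total a b with h | h
    · apply mul_nonneg_of_nonpos_nonpos_fix
      · linarith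
      · have : max (-b) 0 ≤ max (-a) 0 := max_le_max (by linarith) le_rfl
        linarith
    · apply mul_nonneg
      · linarith
      · have : max (-a) 0 ≤ max (-b) 0 := max_le_max (by linarith) le_rfl
        linarith
  have hprod : (a - b) * (max (-b) 0 - max (-a) 0)
      = |a - b| * |max (-a) 0 - max (-b) 0| := by
    rw [← abs_of_nonneg hsign, abs_mul, abs_sub_comm (max (-b) 0)]
  rw [mul_assoc, hprod, ← mul_assoc]
  have h1 : |a - b| ^ (p - 2) * |a - b| = |a - b| ^ (p - 1) := by
    nth_rewrite 2 [← Real.rpow_one |a - b|]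
    rw [← Real.rpow_add hd]
    ring_nf
  rw [h1]
  have h2 : |max (-a) 0 - max (-b) 0| ^ p
      = |max (-a) 0 - max (-b) 0| ^ (p - 1) * |max (-a) 0 - max (-b) 0| := by
    have := Real.rpow_add' (abs_nonneg (max (-a) 0 - max (-b) 0))
      (show p - 1 + 1 ≠ 0 by intro h; linarith [h])
    rw [show p - 1 + 1 = p by ring] at this
    rw [this, Real.rpow_one]
  rw [h2]
  apply mul_le_mul_of_nonneg_right _ (abs_nonneg _)
  exact Real.rpow_le_rpow (abs_nonneg _) hlip (by linarith)
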